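/- For every base b ≥ 2, every m ∈ ℕ, and every k ∈ {0,1,…,bᵐ−1}, among any bᵐ consecutive elements y_l, y_{l+1}, …, y_{l+bᵐ−1} of the van der Corput sequence in base b, exactly one belongs to the interval [k/bᵐ, (k+1)/bᵐ). -/

import Mathlib

/-!
Write `n = r + b ^ m * q` with `r < b ^ m`. The first `m` digits of `vdc b n` are those of `r` in
reverse order, so `vdc b n = (ρ r + vdc b q) / b ^ m`, where `ρ r < b ^ m` is the digit
reversal of `r` and `0 ≤ vdc b q < 1`. Hence `vdc b n ∈ [k / b ^ m, (k + 1) / b ^ m)` iff `ρ r = k`.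
Digit reversal is injective on residues modulo `b ^ m`, and `b ^ m` consecutive integers meet every
residue class exactly once, so `n ↦ ρ (n mod b ^ m)` maps the window bijectively onto
`{0, …, b ^ m - 1}`.
-/

open scoped Classical

/-- The b-adic radical inverse (van der Corput) function. -/
noncomputable def vdc (b n : ℕ) : ℝ :=
  ∑ j ∈ Finset.range (n + 1), ((n / b ^ j % b : ℕ) : ℝ) / (b : ℝ) ^ (j + 1)

open Finset

theorem Finset.card_filter_eq_one_of_injOn {α β : Type*} [DecidableEq β] {s : Finset α}
    {t : Finset β} {f : α → β} (hst : #t ≤ #s) (hf : Set.MapsTo f s t) (hinj : Set.InjOn f s)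
    {y : β} (hy : y ∈ t) : #{x ∈ s | f x = y} = 1 := by
  rw [card_eq_one_iff_existsUnique]
  obtain ⟨x, hx, rfl⟩ := surjOn_of_injOn_of_card_le f hf hinj hst hy
  exact ⟨x, mem_filter.2 ⟨hx, rfl⟩,
    fun x' hx' => hinj (mem_filter.1 hx').1 hx (mem_filter.1 hx').2⟩

theorem Nat.ModEq.eq_of_mem_Ico {B l a a' : ℕ} (h : a ≡ a' [MOD B]) (ha : a ∈ Ico l (l + B))
    (ha' : a' ∈ Ico l (l + B)) : a = a' := by
  rw [mem_Ico] at ha ha'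
  exact h.eq_of_abs_lt (by rw [abs_sub_lt_iff]; omega)

def digitRev (b : ℕ) : ℕ → ℕ → ℕ
  | 0, _ => 0
  | m + 1, n => n % b * b ^ m + digitRev b m (n / b)

theorem digitRev_lt {b : ℕ} (hb : 0 < b) (m n : ℕ) : digitRev b m n < b ^ m := by
  induction m generalizing n with
  | zero => simp [digitRev]
  | succ m ih =>
    calc digitRev b (m + 1) n = n % b * b ^ m + digitRev b m (n / b) := rfl
      _ < (n % b + 1) * b ^ m := by rw [add_one_mul]; exact Nat.add_lt_add_left (ih _) _
      _ ≤ b * b ^ m := Nat.mul_le_mul_right _ (Nat.mod_lt _ hb)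
      _ = b ^ (m + 1) := (pow_succ' b m).symm

theorem modEq_of_digitRev_eq {b : ℕ} (hb : 0 < b) {m n n' : ℕ}
    (h : digitRev b m n = digitRev b m n') :
    n ≡ n' [MOD b ^ m] := by
  induction m generalizing n n' with
  | zero => simp [Nat.ModEq, Nat.mod_one]
  | succ m ih =>
    have hB : 0 < b ^ m := pow_pos hb m
    have split (a u : ℕ) (hu : u < b ^ m) :
        (a * b ^ m + u) / b ^ m = a ∧ (a * b ^ m + u) % b ^ m = u :=
      (Nat.div_mod_unique hB).2 ⟨by ring, hu⟩
    obtain ⟨hd, hr⟩ := split (n % b) _ (digitRev_lt hb m (n / b))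
    obtain ⟨hd', hr'⟩ := split (n' % b) _ (digitRev_lt hb m (n' / b))
    simp only [digitRev] at h
    rw [h] at hd hr
    unfold Nat.ModEq
    rw [pow_succ', Nat.mod_mul, Nat.mod_mul, ← hd, hd', ih (hr.symm.trans hr')]

theorem vdc_nonneg (b n : ℕ) : 0 ≤ vdc b n :=
  sum_nonneg fun _ _ => by positivity

theorem vdc_eq_sum_range {b : ℕ} (hb : 2 ≤ b) {n N : ℕ} (hN : n < N) :
    vdc b n = ∑ j ∈ range N, ((n / b ^ j % b : ℕ) : ℝ) / (b : ℝ) ^ (j + 1) := by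
  refine sum_subset (range_subset_range.2 hN) fun j _ hj => ?_
  rw [mem_range, not_lt] at hj
  have : n < b ^ j := (Nat.lt_pow_self hb).trans_le (Nat.pow_le_pow_right (by omega) (by omega))
  simp [Nat.div_eq_of_lt this]

theorem vdc_eq_mod_add_vdc_div {b : ℕ} (hb : 2 ≤ b) (n : ℕ) :
    vdc b n = ((n % b : ℕ) + vdc b (n / b)) / b := by
  rw [vdc_eq_sum_range hb (N := n + 2) (by omega),
    vdc_eq_sum_range hb (N := n + 1) ((Nat.div_le_self n b).trans_lt n.lt_succ_self),
    sum_range_succ', add_div, sum_div, add_comm]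
  congr 1
  · simp
  · refine sum_congr rfl fun j _ => ?_
    rw [pow_succ' b j, ← Nat.div_div_eq_div_mul, pow_succ _ (j + 1), div_div]

theorem vdc_eq_digitRev {b : ℕ} (hb : 2 ≤ b) (m n : ℕ) :
    vdc b n = (digitRev b m n + vdc b (n / b ^ m)) / (b : ℝ) ^ m := by
  induction m generalizing n with
  | zero => simp [digitRev]
  | succ m ih =>
    have hb0 : (b : ℝ) ≠ 0 := by positivity
    rw [vdc_eq_mod_add_vdc_div hb n, ih (n / b), Nat.div_div_eq_div_mul, ← pow_succ']
    simp only [digitRev]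
    push_cast
    field_simp
    ring

theorem vdc_lt_one {b : ℕ} (hb : 2 ≤ b) (n : ℕ) : vdc b n < 1 := by
  have hn : n < b ^ n := Nat.lt_pow_self hb
  rw [vdc_eq_digitRev hb n n, Nat.div_eq_of_lt hn, show vdc b 0 = 0 by simp [vdc], add_zero,
    div_lt_one (by positivity)]
  exact_mod_cast digitRev_lt (by omega) n n

theorem vdc_mem_Ico_iff {b : ℕ} (hb : 2 ≤ b) (m k n : ℕ) :
    vdc b n ∈ Set.Ico ((k : ℝ) / (b : ℝ) ^ m) (((k : ℝ) + 1) / (b : ℝ) ^ m) ↔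
      digitRev b m n = k := by
  have hbm : (0 : ℝ) < (b : ℝ) ^ m := by positivity
  have ht := vdc_nonneg b (n / b ^ m)
  rw [vdc_eq_digitRev hb m n, Set.mem_Ico, div_le_div_iff_of_pos_right hbm,
    div_lt_div_iff_of_pos_right hbm, ← Nat.floor_eq_iff (by positivity), add_comm,
    Nat.floor_add_natCast ht, Nat.floor_eq_zero.2 (vdc_lt_one hb _), zero_add]

/-- Among any `b ^ m` consecutive elements of the van der Corput sequence in base `b`,
exactly one belongs to the elementary interval `[k / b ^ m, (k + 1) / b ^ m)`. -/
theorem vdc_elementary_interval (b : ℕ) (hb : 2 ≤ b) (m k l : ℕ) (hk : k < b ^ m) :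
    ((Finset.Ico l (l + b ^ m)).filter
      (fun n => vdc b n ∈
        Set.Ico ((k : ℝ) / (b : ℝ) ^ m) (((k : ℝ) + 1) / (b : ℝ) ^ m))).card = 1 := by
  have hb0 : 0 < b := by omega
  rw [filter_congr fun n _ => vdc_mem_Ico_iff hb m k n]
  exact card_filter_eq_one_of_injOn (t := range (b ^ m)) (by simp)
    (fun n _ => mem_range.2 (digitRev_lt hb0 m n))
    (fun n hn n' hn' h => (modEq_of_digitRev_eq hb0 h).eq_of_mem_Ico hn hn') (mem_range.2 hk)
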